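/- For an alphabet X = {x_1,...,x_n} and a nonnegative integer i, define Q̃_{i,i}(X) = Q̃_i(X)² + 2∑_{p=1}^{i}(-1)^p Q̃_{i+p}(X) Q̃_{i-p}(X), where Q̃_j(X) = e_j(X) is the j-th elementary symmetric polynomial (with e_j = 0 for j > n). Then Q̃_{i,i}(X) = e_i(X²), the i-th elementary symmetric polynomial in the squares x_1², ..., x_n². -/

import Mathlib

open Finset

/-- `Qtilde s i j = e_i(s) e_j(s) + 2 ∑_{p=1}^{j} (-1)^p e_{i+p}(s) e_{j-p}(s)`. -/
def Qtilde {R : Type*} [CommRing R] (s : Multiset R) (i j : ℕ) : R :=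
  s.esymm i * s.esymm j +
    2 * ∑ p ∈ Finset.Icc 1 j, (-1 : R) ^ p * s.esymm (i + p) * s.esymm (j - p)

/-!
Comparing coefficients of `t ^ (2 i)` in `∏ (1 - x t) · ∏ (1 + x t) = ∏ (1 - x² t²)` gives
`∑_{a + b = 2i} (-1)^a e_a e_b = (-1)^i e_i(X²)`. In the left-hand side the terms `(a, b)` and
`(b, a)` coincide, and grouping them around the middle term `a = b = i` yields `(-1)^i Q̃_{i,i}`.
-/

open Polynomial

theorem Finset.Nat.sum_antidiagonal_two_mul_neg_one_pow_mul {R : Type*} [CommRing R]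
    (f : ℕ → R) (i : ℕ) :
    ∑ ab ∈ antidiagonal (2 * i), (-1) ^ ab.1 * f ab.1 * f ab.2 =
      (-1) ^ i * (f i * f i + 2 * ∑ p ∈ Icc 1 i, (-1) ^ p * f (i + p) * f (i - p)) := by
  set h : ℕ → R := fun k => (-1) ^ k * f k * f (2 * i - k)
  have pair : ∀ k ∈ range i, h (i - 1 - k) + h (i + (k + 1)) =
      (-1) ^ i * (2 * ((-1) ^ (k + 1) * f (i + (k + 1)) * f (i - (k + 1)))) := by
    intro k hk
    have hki : k < i := mem_range.mp hk
    -- `i - (k + 1)` and `i + (k + 1)` differ by the even number `2 (k + 1)`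
    have hsign : (-1 : R) ^ (i - (k + 1)) = (-1) ^ i * (-1) ^ (k + 1) := by
      rw [← pow_add, show i + (k + 1) = i - (k + 1) + 2 * (k + 1) by omega, pow_add, pow_mul]
      simp
    simp only [h, show i - 1 - k = i - (k + 1) by omega, show 2 * i - (i - (k + 1)) = i + (k + 1)
      by omega, show 2 * i - (i + (k + 1)) = i - (k + 1) by omega, hsign, pow_add (-1 : R) i]
    ring
  have middle : h (i + 0) = (-1) ^ i * (f i * f i) := by
    simp only [h, add_zero, show 2 * i - i = i by omega, mul_assoc]
  have upper : ∑ p ∈ Icc 1 i, (-1) ^ p * f (i + p) * f (i - p) =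
      ∑ k ∈ range i, (-1) ^ (k + 1) * f (i + (k + 1)) * f (i - (k + 1)) := by
    rw [← Ico_add_one_right_eq_Icc, sum_Ico_eq_sum_range, Nat.add_sub_cancel]
    simp only [add_comm 1]
  calc ∑ ab ∈ antidiagonal (2 * i), (-1) ^ ab.1 * f ab.1 * f ab.2
      = ∑ k ∈ range (i + (i + 1)), h k := by
        rw [Finset.Nat.sum_antidiagonal_eq_sum_range_succ_mk, Nat.succ_eq_add_one,
          show 2 * i + 1 = i + (i + 1) by omega]
    _ = ∑ k ∈ range i, (h (i - 1 - k) + h (i + (k + 1))) + h (i + 0) := by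
        rw [sum_range_add, sum_range_succ', ← sum_range_reflect h i, sum_add_distrib, add_assoc]
    _ = _ := by
        rw [sum_congr rfl pair, middle, upper, ← mul_sum, ← mul_sum, ← mul_add, add_comm]

namespace Multiset

theorem esymm_cons_succ {R : Type*} [CommSemiring R] (a : R) (s : Multiset R) (k : ℕ) :
    (a ::ₘ s).esymm (k + 1) = s.esymm (k + 1) + a * s.esymm k := by
  simp [esymm, powersetCard_cons, map_map, sum_map_mul_left]

theorem coeff_prod_one_add_C_mul_X {R : Type*} [CommSemiring R] (s : Multiset R) (k : ℕ) :
    (s.map fun r => 1 + C r * X).prod.coeff k = s.esymm k := by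
  induction s using Multiset.induction generalizing k with
  | empty => cases k <;> simp [esymm, coeff_one, powersetCard_zero_right]
  | cons a s ih =>
    rw [map_cons, prod_cons, add_mul, one_mul, coeff_add, mul_assoc, coeff_C_mul]
    cases k with
    | zero => simp [ih, esymm]
    | succ k => rw [coeff_X_mul, ih, ih, esymm_cons_succ]

theorem coeff_prod_one_sub_C_mul_X {R : Type*} [CommRing R] (s : Multiset R) (k : ℕ) :
    (s.map fun r => 1 - C r * X).prod.coeff k = (-1) ^ k * s.esymm k := by
  rw [← esymm_neg, ← coeff_prod_one_add_C_mul_X, map_map]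
  simp [sub_eq_add_neg]

theorem prod_one_sub_C_mul_X_mul_prod_one_add_C_mul_X {R : Type*} [CommRing R]
    (s : Multiset R) :
    (s.map fun r => 1 - C r * X).prod * (s.map fun r => 1 + C r * X).prod =
      expand R 2 ((s.map fun r => r ^ 2).map fun r => 1 - C r * X).prod := by
  rw [← prod_map_mul, map_multiset_prod, map_map, map_map]
  refine congrArg _ (map_congr rfl fun r _ => ?_)
  simp only [Function.comp_apply, map_sub, map_one, map_mul, expand_C, expand_X, map_pow]
  ring

theorem sum_antidiagonal_neg_one_pow_mul_esymm_mul_esymm {R : Type*} [CommRing R]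
    (s : Multiset R) (i : ℕ) :
    ∑ ab ∈ HasAntidiagonal.antidiagonal (2 * i), (-1) ^ ab.1 * s.esymm ab.1 * s.esymm ab.2 =
      (-1) ^ i * (s.map fun x => x ^ 2).esymm i := by
  have h := congrArg (coeff · (i * 2)) (prod_one_sub_C_mul_X_mul_prod_one_add_C_mul_X s)
  simp only [coeff_expand_mul two_pos, coeff_prod_one_sub_C_mul_X, coeff_mul,
    coeff_prod_one_add_C_mul_X] at h
  rw [mul_comm 2, ← h]

end Multiset

theorem Qtilde_diag_eq_esymm_squares {R : Type*} [CommRing R] (s : Multiset R) (i : ℕ) :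
    Qtilde s i i = (s.map fun x => x ^ 2).esymm i := by
  refine ((isUnit_neg_one (α := R)).pow i).mul_left_cancel ?_
  rw [← s.sum_antidiagonal_neg_one_pow_mul_esymm_mul_esymm,
    Finset.Nat.sum_antidiagonal_two_mul_neg_one_pow_mul, Qtilde]
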